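/- arXiv:2210.01533 — 2 statements merged into one kernel-verified Lean document; each statement's English description precedes it below -/
import Mathlib

section
/- The Jaccard distance d(A,B) = 1 - |A ∩ B|/|A ∪ B| (with d(A,B)=0 when both sets are empty) satisfies the triangle inequality on finite sets: for all finite sets A, B, C, d(A,C) ≤ d(A,B) + d(B,C). -/
/-- The Jaccard distance between finite sets: `1 - |A ∩ B| / |A ∪ B|`,
with the convention that it is `0` when both sets are empty. -/
noncomputable def jaccardDist {α : Type*} [DecidableEq α] (A B : Finset α) : ℝ :=
  if A ∪ B = ∅ then 0 else 1 - ((A ∩ B).card : ℝ) / ((A ∪ B).card : ℝ)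

lemma jaccardDist_nonneg {α : Type*} [DecidableEq α] (A B : Finset α) :
    0 ≤ jaccardDist A B := by
  unfold jaccardDist
  split
  · exact le_rfl
  · rename_i h
    have hc : (A ∩ B).card ≤ (A ∪ B).card :=
      Finset.card_le_card (Finset.inter_subset_union)
    have hu : (0:ℝ) < (A ∪ B).card := by
      have := Finset.card_pos.mpr (Finset.nonempty_of_ne_empty h)
      exact_mod_cast this
    have : ((A ∩ B).card : ℝ) / (A ∪ B).card ≤ 1 := by
      rw [div_le_one hu]; exact_mod_cast hc
    linarith

set_option maxHeartbeats 1000000 in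
theorem jaccardDist_triangle {α : Type*} [DecidableEq α] (A B C : Finset α) :
    jaccardDist A C ≤ jaccardDist A B + jaccardDist B C := by
  by_cases hAC : A ∪ C = ∅
  · rw [jaccardDist, if_pos hAC]
    exact add_nonneg (jaccardDist_nonneg A B) (jaccardDist_nonneg B C)
  by_cases hAB : A ∪ B = ∅
  · obtain ⟨hA, hB⟩ := Finset.union_eq_empty.mp hAB
    subst hA; subst hB
    simp [jaccardDist]
  by_cases hBC : B ∪ C = ∅
  · obtain ⟨hB, hC⟩ := Finset.union_eq_empty.mp hBC
    subst hB; subst hC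
    simp [jaccardDist]
  -- Main case: all three unions nonempty.
  set D1 := (A ∪ C) \ (A ∩ C) with hD1
  set D2 := (A ∪ B) \ (A ∩ B) with hD2
  set D3 := (B ∪ C) \ (B ∩ C) with hD3
  set B0 := B \ (A ∪ C) with hB0
  -- key combinatorial inequality
  have hsub1 : D1 ∪ B0 ⊆ D2 ∪ D3 := by
    intro x hx
    simp only [hD1, hD2, hD3, hB0, Finset.mem_union, Finset.mem_sdiff,
      Finset.mem_inter] at *
    tauto
  have hsub2 : B0 ⊆ D2 ∩ D3 := by
    intro x hx
    simp only [hD2, hD3, hB0, Finset.mem_union, Finset.mem_sdiff,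
      Finset.mem_inter] at *
    tauto
  have hdisj : Disjoint D1 B0 := by
    rw [Finset.disjoint_left]
    intro x hx hx'
    simp only [hD1, hB0, Finset.mem_union, Finset.mem_sdiff, Finset.mem_inter] at *
    tauto
  have key : D1.card + 2 * B0.card ≤ D2.card + D3.card := by
    have h1 : (D2 ∪ D3).card + (D2 ∩ D3).card = D2.card + D3.card :=
      Finset.card_union_add_card_inter _ _
    have h2 : (D1 ∪ B0).card = D1.card + B0.card :=
      Finset.card_union_of_disjoint hdisj
    have h3 : (D1 ∪ B0).card ≤ (D2 ∪ D3).card := Finset.card_le_card hsub1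
    have h4 : B0.card ≤ (D2 ∩ D3).card := Finset.card_le_card hsub2
    omega
  -- big union
  have hUeq : A ∪ B ∪ C = (A ∪ C) ∪ B0 := by
    ext x
    simp only [hB0, Finset.mem_union, Finset.mem_sdiff]
    tauto
  have hdisjU : Disjoint (A ∪ C) B0 := by
    rw [Finset.disjoint_left]
    intro x hx hx'
    simp only [hB0, Finset.mem_sdiff] at hx'
    exact hx'.2 hx
  have hUcard : (A ∪ B ∪ C).card = (A ∪ C).card + B0.card := by
    rw [hUeq]; exact Finset.card_union_of_disjoint hdisjU
  -- cardinalities as reals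
  have hu1 : (0:ℝ) < (A ∪ C).card := by
    exact_mod_cast Finset.card_pos.mpr (Finset.nonempty_of_ne_empty hAC)
  have hu2 : (0:ℝ) < (A ∪ B).card := by
    exact_mod_cast Finset.card_pos.mpr (Finset.nonempty_of_ne_empty hAB)
  have hu3 : (0:ℝ) < (B ∪ C).card := by
    exact_mod_cast Finset.card_pos.mpr (Finset.nonempty_of_ne_empty hBC)
  have hU : (0:ℝ) < (A ∪ B ∪ C).card := by
    have : (A ∪ C).card ≤ (A ∪ B ∪ C).card := by omega
    have h := hu1
    exact_mod_cast lt_of_lt_of_le (by exact_mod_cast hu1) this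
  have hcard1 : (D1.card : ℝ) = ((A ∪ C).card : ℝ) - ((A ∩ C).card : ℝ) := by
    rw [hD1, Finset.card_sdiff_of_subset (Finset.inter_subset_union)]
    rw [Nat.cast_sub (Finset.card_le_card Finset.inter_subset_union)]
  have hcard2 : (D2.card : ℝ) = ((A ∪ B).card : ℝ) - ((A ∩ B).card : ℝ) := by
    rw [hD2, Finset.card_sdiff_of_subset (Finset.inter_subset_union)]
    rw [Nat.cast_sub (Finset.card_le_card Finset.inter_subset_union)]
  have hcard3 : (D3.card : ℝ) = ((B ∪ C).card : ℝ) - ((B ∩ C).card : ℝ) := by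
    rw [hD3, Finset.card_sdiff_of_subset (Finset.inter_subset_union)]
    rw [Nat.cast_sub (Finset.card_le_card Finset.inter_subset_union)]
  have hle2 : ((A ∪ B).card : ℝ) ≤ ((A ∪ B ∪ C).card : ℝ) := by
    exact_mod_cast Finset.card_le_card Finset.subset_union_left
  have hle3 : ((B ∪ C).card : ℝ) ≤ ((A ∪ B ∪ C).card : ℝ) := by
    have : B ∪ C ⊆ A ∪ B ∪ C := by
      intro x hx
      simp only [Finset.mem_union] at *
      tauto
    exact_mod_cast Finset.card_le_card this
  have hd1le : (D1.card : ℝ) ≤ ((A ∪ C).card : ℝ) := by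
    exact_mod_cast Finset.card_le_card (Finset.sdiff_subset)
  have hkeyR : (D1.card : ℝ) + 2 * (B0.card : ℝ) ≤ (D2.card : ℝ) + (D3.card : ℝ) := by
    exact_mod_cast key
  have hUcardR : ((A ∪ B ∪ C).card : ℝ) = ((A ∪ C).card : ℝ) + (B0.card : ℝ) := by
    exact_mod_cast hUcard
  -- rewrite the goal
  rw [jaccardDist, jaccardDist, jaccardDist, if_neg hAC, if_neg hAB, if_neg hBC]
  have e1 : 1 - ((A ∩ C).card : ℝ) / ((A ∪ C).card : ℝ) = (D1.card : ℝ) / ((A ∪ C).card : ℝ) := by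
    rw [hcard1]; field_simp
  have e2 : 1 - ((A ∩ B).card : ℝ) / ((A ∪ B).card : ℝ) = (D2.card : ℝ) / ((A ∪ B).card : ℝ) := by
    rw [hcard2]; field_simp
  have e3 : 1 - ((B ∩ C).card : ℝ) / ((B ∪ C).card : ℝ) = (D3.card : ℝ) / ((B ∪ C).card : ℝ) := by
    rw [hcard3]; field_simp
  rw [e1, e2, e3]
  have hb0 : (0:ℝ) ≤ (B0.card : ℝ) := by positivity
  calc (D1.card : ℝ) / ((A ∪ C).card : ℝ)
      ≤ ((D1.card : ℝ) + 2 * (B0.card : ℝ)) / ((A ∪ B ∪ C).card : ℝ) := by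
        rw [div_le_div_iff₀ hu1 hU, hUcardR]
        nlinarith [hd1le, hb0, hu1]
    _ ≤ ((D2.card : ℝ) + (D3.card : ℝ)) / ((A ∪ B ∪ C).card : ℝ) := by
        gcongr
    _ = (D2.card : ℝ) / ((A ∪ B ∪ C).card : ℝ) + (D3.card : ℝ) / ((A ∪ B ∪ C).card : ℝ) := by
        rw [add_div]
    _ ≤ (D2.card : ℝ) / ((A ∪ B).card : ℝ) + (D3.card : ℝ) / ((B ∪ C).card : ℝ) := by
        gcongr <;> positivity
end

section
/- For the tail-sampling weight w(T, D) = |(L_D ∩ T) \ C_D| where C_D ⊆ L_D is the set of covered label occurrences in D, the two-stage sampling returns T with probability proportional to Σ_{D : T ⊆ L_D} |(L_D ∩ T) \ C_D|, which equals the uncovered area of T with respect to the rule set. -/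
/-- Two-stage tail sampling with the concrete weights
`w(T, D) = |T \ C D|` for `T ⊆ L D` (and `0` otherwise): the overall
probability of drawing a tail `T` is proportional to the uncovered area
`A(T; R) = ∑_{D : T ⊆ L D} |T \ C D|`. -/
theorem two_stage_tail_sampling_uncovered_area {ι L : Type*} [Fintype ι]
    [DecidableEq ι] [DecidableEq L]
    (Lab : ι → Finset L) (C : ι → Finset L) (hC : ∀ D, C D ⊆ Lab D)
    (w : Finset L → ι → ℝ)
    (hw : ∀ T D, w T D = if T ⊆ Lab D then ((T \ C D).card : ℝ) else 0)
    (wD : ι → ℝ) (hwD : ∀ D, wD D = ∑ T ∈ (Lab D).powerset, w T D)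
    (hpos : 0 < ∑ D : ι, wD D) (T : Finset L) :
    ∑ D : ι, (wD D / ∑ D' : ι, wD D') * (w T D / wD D) =
      (∑ D ∈ Finset.univ.filter (fun D => T ⊆ Lab D), ((T \ C D).card : ℝ)) /
        (∑ D : ι, wD D) := by
  have hterm : ∀ D : ι, (wD D / ∑ D' : ι, wD D') * (w T D / wD D)
      = w T D / ∑ D' : ι, wD D' := by
    intro D
    by_cases h : wD D = 0
    · have hwz : w T D = 0 := by
        by_cases hsub : T ⊆ Lab D
        · have hmem : T ∈ (Lab D).powerset := Finset.mem_powerset.mpr hsub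
          have hnn : ∀ T' ∈ (Lab D).powerset, 0 ≤ w T' D := by
            intro T' _
            rw [hw]
            split <;> positivity
          have := (Finset.sum_eq_zero_iff_of_nonneg hnn).mp ((hwD D).symm.trans h)
          exact this T hmem
        · rw [hw]; simp [hsub]
      simp [h, hwz]
    · field_simp
  rw [Finset.sum_congr rfl (fun D _ => hterm D), ← Finset.sum_div]
  congr 1
  rw [← Finset.sum_filter_add_sum_filter_not Finset.univ (fun D => T ⊆ Lab D) (fun D => w T D)]
  have h1 : ∀ D ∈ Finset.univ.filter (fun D => T ⊆ Lab D), w T D = ((T \ C D).card : ℝ) := by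
    intro D hD
    rw [hw]
    simp [Finset.mem_filter.mp hD |>.2]
  have h2 : ∀ D ∈ Finset.univ.filter (fun D => ¬ T ⊆ Lab D), w T D = 0 := by
    intro D hD
    rw [hw]
    simp [Finset.mem_filter.mp hD |>.2]
  rw [Finset.sum_congr rfl h1, Finset.sum_congr rfl h2]
  simp
end
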